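/- arXiv:math/0404114 — 4 statements merged into one kernel-verified Lean document; each statement's English description precedes it below -/
import Mathlib

section
/- For any integers r and Q with Q ≥ 1, the exponential sum ∑_{γ ∈ F_Q} e(rγ) over the Farey fractions γ = a/q of order Q with 1 ≤ a ≤ q (in lowest terms, q ≤ Q) equals ∑_{d ≥ 1, d | r} d · M(Q/d), where M(x) = ∑_{n ≤ x} μ(n) is the Mertens function and e(t) = exp(2πit); for r ≠ 0 the sum is over divisors d of |r| with d ≤ Q, and for r = 0 it is interpreted as the full sum ∑_{d=1}^{Q} d·M(Q/d). -/
open Finset ArithmeticFunction Complex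

/-- Mertens function `M(m) = ∑_{1 ≤ n ≤ m} μ(n)`. -/
def Mertens (m : ℕ) : ℤ := ∑ n ∈ Finset.Icc 1 m, ArithmeticFunction.moebius n

open scoped ArithmeticFunction.Moebius ArithmeticFunction.zeta

lemma sum_mu_divisors (n : ℕ) : ∑ d ∈ n.divisors, (μ d : ℤ) = if n = 1 then 1 else 0 := by
  have h : (μ * (ζ : ArithmeticFunction ℤ)) n = (1 : ArithmeticFunction ℤ) n := by
    rw [moebius_mul_coe_zeta]
  rwa [coe_mul_zeta_apply, one_apply] at h

/-- Sum of `m`-th roots of unity powers. -/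
lemma roots_sum (r : ℤ) (m : ℕ) (hm : 1 ≤ m) :
    ∑ b ∈ Finset.Icc 1 m, Complex.exp (2 * Real.pi * Complex.I * r * b / m)
      = if (m : ℤ) ∣ r then (m : ℂ) else 0 := by
  have hm0 : (m : ℂ) ≠ 0 := Nat.cast_ne_zero.mpr (by omega)
  set z : ℂ := Complex.exp (2 * Real.pi * Complex.I * r / m) with hz
  have hpow : ∀ b : ℕ, Complex.exp (2 * Real.pi * Complex.I * r * b / m) = z ^ b := by
    intro b
    rw [hz, ← Complex.exp_nat_mul]
    ring_nf
  by_cases hdvd : (m : ℤ) ∣ r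
  · obtain ⟨k, hk⟩ := hdvd
    have hz1 : z = 1 := by
      rw [hz, hk]
      push_cast
      rw [show 2 * ↑Real.pi * Complex.I * (↑m * ↑k) / ↑m = (k : ℂ) * (2 * ↑Real.pi * Complex.I) by
        field_simp]
      exact Complex.exp_int_mul_two_pi_mul_I k
    rw [if_pos (show (m : ℤ) ∣ r from ⟨k, hk⟩)]
    simp only [hpow, hz1, one_pow, Finset.sum_const, Nat.card_Icc, smul_eq_mul, mul_one]
    norm_num
  · have hz1 : z ≠ 1 := by
      rw [hz, Ne, Complex.exp_eq_one_iff]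
      rintro ⟨n, hn⟩
      apply hdvd
      refine ⟨n, ?_⟩
      have h2 : (2 : ℂ) * Real.pi * Complex.I ≠ 0 := by
        simp [Real.pi_ne_zero, Complex.I_ne_zero]
      have : (r : ℂ) = m * n := by
        apply mul_left_cancel₀ h2
        field_simp at hn
        linear_combination (2 * ↑Real.pi * Complex.I) * hn
      exact_mod_cast this
    have hzm : z ^ m = 1 := by
      rw [hz, ← Complex.exp_nat_mul]
      rw [show (m : ℂ) * (2 * ↑Real.pi * Complex.I * ↑r / ↑m) = (r : ℂ) * (2 * ↑Real.pi * Complex.I) by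
        field_simp]
      exact Complex.exp_int_mul_two_pi_mul_I r
    simp only [hpow, if_neg hdvd]
    have : ∑ b ∈ Finset.Icc 1 m, z ^ b = z * ∑ b ∈ Finset.range m, z ^ b := by
      rw [Finset.mul_sum]
      rw [show Finset.Icc 1 m = Finset.Ico 1 (m + 1) by rfl]
      rw [Finset.sum_Ico_eq_sum_range]
      simp [pow_succ, mul_comm, pow_add]
    rw [this, geom_sum_eq hz1, hzm]
    simp

lemma ramanujan_sum (r : ℤ) (q : ℕ) (hq : 1 ≤ q) :
    ∑ a ∈ (Finset.Icc 1 q).filter (fun a => Nat.gcd a q = 1),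
        Complex.exp (2 * Real.pi * Complex.I * r * a / q)
      = ∑ p ∈ q.divisorsAntidiagonal,
          (μ p.1 : ℂ) * (if (p.2 : ℤ) ∣ r then (p.2 : ℂ) else 0) := by
  have hq0 : q ≠ 0 := by omega
  -- Step 1: write the coprimality condition via Möbius
  rw [Finset.sum_filter]
  have step1 : ∀ a ∈ Finset.Icc 1 q,
      (if Nat.gcd a q = 1 then Complex.exp (2 * Real.pi * Complex.I * r * a / q) else 0)
        = ∑ d ∈ q.divisors.filter (· ∣ a),
            (μ d : ℂ) * Complex.exp (2 * Real.pi * Complex.I * r * a / q) := by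
    intro a ha
    have ha1 : 1 ≤ a := (Finset.mem_Icc.mp ha).1
    have hgcd : Nat.gcd a q ≠ 0 := fun h => hq0 (Nat.eq_zero_of_gcd_eq_zero_right h)
    have hset : (Nat.gcd a q).divisors = q.divisors.filter (· ∣ a) := by
      ext d
      simp only [Nat.mem_divisors, Finset.mem_filter, Nat.dvd_gcd_iff]
      constructor
      · rintro ⟨⟨h1, h2⟩, _⟩; exact ⟨⟨h2, hq0⟩, h1⟩
      · rintro ⟨⟨h2, _⟩, h1⟩; exact ⟨⟨h1, h2⟩, hgcd⟩
    rw [← hset, ← Finset.sum_mul]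
    have key : (∑ d ∈ (Nat.gcd a q).divisors, (μ d : ℂ)) = if Nat.gcd a q = 1 then 1 else 0 := by
      rw [show (∑ d ∈ (Nat.gcd a q).divisors, (μ d : ℂ))
            = (((∑ d ∈ (Nat.gcd a q).divisors, μ d : ℤ)) : ℂ) from by push_cast; rfl,
        sum_mu_divisors]
      split <;> simp
    rw [key]
    split <;> simp
  rw [Finset.sum_congr rfl step1]
  -- Step 2: swap the order of summation
  rw [Finset.sum_comm' (t' := q.divisors) (s' := fun d => (Finset.Icc 1 q).filter (d ∣ ·))
    (by intro a d; simp only [Finset.mem_filter]; tauto)]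
  -- Step 3: evaluate the inner sum for each divisor d
  have step3 : ∀ d ∈ q.divisors,
      ∑ a ∈ (Finset.Icc 1 q).filter (d ∣ ·),
          (μ d : ℂ) * Complex.exp (2 * Real.pi * Complex.I * r * a / q)
        = (μ d : ℂ) * (if ((q / d : ℕ) : ℤ) ∣ r then ((q / d : ℕ) : ℂ) else 0) := by
    intro d hd
    obtain ⟨hdvd, -⟩ := Nat.mem_divisors.mp hd
    have hd1 : 1 ≤ d := Nat.pos_of_dvd_of_pos hdvd (by omega)
    have hm1 : 1 ≤ q / d := Nat.one_le_div_iff (by omega) |>.mpr (Nat.le_of_dvd (by omega) hdvd)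
    have hdq : d * (q / d) = q := Nat.mul_div_cancel' hdvd
    rw [← Finset.mul_sum, ← roots_sum r (q / d) hm1]
    congr 1
    refine Finset.sum_nbij' (fun a => a / d) (fun b => d * b) ?_ ?_ ?_ ?_ ?_
    · intro a ha
      simp only [Finset.mem_filter, Finset.mem_Icc] at ha ⊢
      obtain ⟨⟨h1, h2⟩, h3⟩ := ha
      constructor
      · exact Nat.one_le_div_iff (by omega) |>.mpr (Nat.le_of_dvd (by omega) h3)
      · exact Nat.div_le_div_right h2
    · intro b hb
      simp only [Finset.mem_Icc] at hb
      simp only [Finset.mem_filter, Finset.mem_Icc]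
      refine ⟨⟨by nlinarith [hb.1], ?_⟩, Dvd.intro b rfl⟩
      calc d * b ≤ d * (q / d) := Nat.mul_le_mul_left d hb.2
        _ = q := hdq
    · intro a ha
      simp only [Finset.mem_filter] at ha
      exact Nat.mul_div_cancel' ha.2
    · intro b hb
      exact Nat.mul_div_cancel_left b (by omega)
    · intro a ha
      simp only [Finset.mem_filter, Finset.mem_Icc] at ha
      obtain ⟨⟨h1, h2⟩, h3⟩ := ha
      congr 1
      have hdc : (d : ℂ) ≠ 0 := Nat.cast_ne_zero.mpr (by omega)
      have hqc : (q : ℂ) ≠ 0 := Nat.cast_ne_zero.mpr hq0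
      have hmc : ((q / d : ℕ) : ℂ) ≠ 0 := Nat.cast_ne_zero.mpr (by omega)
      have hcast : (d : ℂ) * ((q / d : ℕ) : ℂ) = (q : ℂ) := by exact_mod_cast congrArg (Nat.cast : ℕ → ℂ) hdq
      have hacast : ((a : ℕ) : ℂ) = (d : ℂ) * ((a / d : ℕ) : ℂ) := by
        exact_mod_cast congrArg (Nat.cast : ℕ → ℂ) (Nat.mul_div_cancel' h3).symm
      rw [hacast, ← hcast]
      field_simp
      try ring
  rw [Finset.sum_congr rfl step3]
  -- Step 4: convert to divisorsAntidiagonal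
  rw [Nat.sum_divisorsAntidiagonal (fun d m => (μ d : ℂ) * (if (m : ℤ) ∣ r then (m : ℂ) else 0))]

theorem farey_exponential_sum (r : ℤ) (Q : ℕ) (hQ : 1 ≤ Q) :
    ∑ q ∈ Finset.Icc 1 Q, ∑ a ∈ (Finset.Icc 1 q).filter (fun a => Nat.gcd a q = 1),
        Complex.exp (2 * Real.pi * Complex.I * r * a / q)
      = if r = 0 then (∑ d ∈ Finset.Icc 1 Q, (d : ℂ) * Mertens (Q / d))
        else ∑ d ∈ (r.natAbs.divisors.filter (· ≤ Q)), (d : ℂ) * Mertens (Q / d) := by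
  -- Step 1: apply ramanujan_sum and unfold divisorsAntidiagonal
  have hstep : ∀ q ∈ Finset.Icc 1 Q,
      ∑ a ∈ (Finset.Icc 1 q).filter (fun a => Nat.gcd a q = 1),
          Complex.exp (2 * Real.pi * Complex.I * r * a / q)
        = ∑ m ∈ q.divisors, (μ (q / m) : ℂ) * (if (m : ℤ) ∣ r then (m : ℂ) else 0) := by
    intro q hq'
    rw [ramanujan_sum r q (Finset.mem_Icc.mp hq').1,
      Nat.sum_divisorsAntidiagonal' (fun d m => (μ d : ℂ) * (if (m : ℤ) ∣ r then (m : ℂ) else 0))]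
  rw [Finset.sum_congr rfl hstep]
  -- Step 2: swap the sums over q and m
  rw [Finset.sum_comm' (t' := Finset.Icc 1 Q) (s' := fun m => (Finset.Icc 1 Q).filter (m ∣ ·))
    (by
      intro q m
      simp only [Finset.mem_Icc, Nat.mem_divisors, Finset.mem_filter]
      constructor
      · rintro ⟨⟨h1, h2⟩, h3, -⟩
        have hm1 : 1 ≤ m := Nat.pos_of_dvd_of_pos h3 (by omega)
        have hmq : m ≤ q := Nat.le_of_dvd (by omega) h3
        exact ⟨⟨⟨h1, h2⟩, h3⟩, hm1, by omega⟩
      · rintro ⟨⟨⟨h1, h2⟩, h3⟩, -⟩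
        exact ⟨⟨h1, h2⟩, h3, by omega⟩)]
  -- Step 3: reindex the inner sum q = m * d
  have hinner : ∀ m ∈ Finset.Icc 1 Q,
      ∑ q ∈ (Finset.Icc 1 Q).filter (m ∣ ·),
          (μ (q / m) : ℂ) * (if (m : ℤ) ∣ r then (m : ℂ) else 0)
        = (if (m : ℤ) ∣ r then (m : ℂ) else 0) * (Mertens (Q / m) : ℂ) := by
    intro m hm
    obtain ⟨hm1, hmQ⟩ := Finset.mem_Icc.mp hm
    have : ∑ q ∈ (Finset.Icc 1 Q).filter (m ∣ ·),
          (μ (q / m) : ℂ) * (if (m : ℤ) ∣ r then (m : ℂ) else 0)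
        = ∑ d ∈ Finset.Icc 1 (Q / m), (μ d : ℂ) * (if (m : ℤ) ∣ r then (m : ℂ) else 0) := by
      refine Finset.sum_nbij' (fun q => q / m) (fun d => m * d) ?_ ?_ ?_ ?_ ?_
      · intro q hq'
        simp only [Finset.mem_filter, Finset.mem_Icc] at hq' ⊢
        obtain ⟨⟨h1, h2⟩, h3⟩ := hq'
        exact ⟨Nat.one_le_div_iff (by omega) |>.mpr (Nat.le_of_dvd (by omega) h3),
          Nat.div_le_div_right h2⟩
      · intro d hd
        simp only [Finset.mem_Icc] at hd
        simp only [Finset.mem_filter, Finset.mem_Icc]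
        refine ⟨⟨by nlinarith [hd.1], ?_⟩, Dvd.intro d rfl⟩
        calc m * d ≤ m * (Q / m) := Nat.mul_le_mul_left m hd.2
          _ ≤ Q := Nat.mul_div_le Q m
      · intro q hq'
        simp only [Finset.mem_filter] at hq'
        exact Nat.mul_div_cancel' hq'.2
      · intro d hd
        exact Nat.mul_div_cancel_left d (by omega)
      · intro q hq'
        simp only [Finset.mem_filter] at hq'
        rfl
    rw [this, ← Finset.sum_mul, mul_comm]
    congr 1
    rw [Mertens]
    push_cast
    rfl
  rw [Finset.sum_congr rfl hinner]
  -- Step 4: case split on r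
  by_cases hr : r = 0
  · subst hr
    rw [if_pos rfl]
    refine Finset.sum_congr rfl fun m hm => ?_
    rw [if_pos (dvd_zero _)]
  · rw [if_neg hr]
    have hset : r.natAbs.divisors.filter (· ≤ Q) = (Finset.Icc 1 Q).filter (fun m : ℕ => (m : ℤ) ∣ r) := by
      ext m
      simp only [Finset.mem_filter, Nat.mem_divisors, Finset.mem_Icc, Int.natCast_dvd]
      have hr0 : r.natAbs ≠ 0 := Int.natAbs_ne_zero.mpr hr
      constructor
      · rintro ⟨⟨h1, _⟩, h2⟩
        exact ⟨⟨Nat.pos_of_dvd_of_pos h1 (Nat.pos_of_ne_zero hr0), h2⟩, h1⟩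
      · rintro ⟨⟨_, h2⟩, h1⟩
        exact ⟨⟨h1, hr0⟩, h2⟩
    rw [hset, Finset.sum_filter]
    refine Finset.sum_congr rfl fun m hm => ?_
    by_cases hd : (m : ℤ) ∣ r
    · rw [if_pos hd, if_pos hd]
    · rw [if_neg hd, if_neg hd, zero_mul]
end

section
/- As x → ∞, ∑_{1 ≤ q < x} φ(q) · log(x/q) = 3x²/(2π²) + O(x). -/
open Finset Real ArithmeticFunction

namespace TLSA
noncomputable section

/-- The index set: naturals `1 ≤ q < x`. -/
def S (x : ℝ) : Finset ℕ := (Finset.Icc 1 ⌊x⌋₊).filter (fun q : ℕ => (q : ℝ) < x)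

lemma mem_S {x : ℝ} {q : ℕ} : q ∈ S x ↔ 1 ≤ q ∧ (q : ℝ) < x := by
  simp only [S, Finset.mem_filter, Finset.mem_Icc]
  constructor
  · rintro ⟨⟨h1, _⟩, h2⟩; exact ⟨h1, h2⟩
  · rintro ⟨h1, h2⟩; exact ⟨⟨h1, Nat.le_floor h2.le⟩, h2⟩

lemma S_eq_Icc (y : ℝ) : S y = Finset.Icc 1 (⌈y⌉₊ - 1) := by
  ext m
  simp only [mem_S, Finset.mem_Icc]
  constructor
  · rintro ⟨h1, h2⟩
    exact ⟨h1, by have := Nat.lt_ceil.mpr h2; omega⟩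
  · rintro ⟨h1, h2⟩
    refine ⟨h1, Nat.lt_ceil.mp ?_⟩
    have : 0 < ⌈y⌉₊ := by omega
    omega

/-- The smoothed inner sum. -/
def T (y : ℝ) : ℝ := ∑ m ∈ S y, (m : ℝ) * Real.log (y / m)


lemma log_le_two_sqrt {u : ℝ} (hu : 0 < u) : Real.log u ≤ 2 * Real.sqrt u := by
  have h1 : Real.log (Real.sqrt u) = Real.log u / 2 := Real.log_sqrt hu.le
  have h2 : Real.log (Real.sqrt u) ≤ Real.sqrt u - 1 :=
    Real.log_le_sub_one_of_pos (Real.sqrt_pos.mpr hu)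
  nlinarith [Real.sqrt_nonneg u]

lemma sum_inv_sqrt (N : ℕ) : ∑ d ∈ Finset.Icc 1 N, 1 / Real.sqrt d ≤ 2 * Real.sqrt N := by
  induction N with
  | zero => simp
  | succ n ih =>
    rw [← Finset.Ico_add_one_right_eq_Icc] at ih ⊢
    rw [Finset.sum_Ico_succ_top (by omega)]
    have h1 : Real.sqrt (n + 1) > 0 := Real.sqrt_pos.mpr (by positivity)
    have h2 : 1 / Real.sqrt (n+1) ≤ 2 * (Real.sqrt (n+1) - Real.sqrt n) := by
      rw [div_le_iff₀ h1]
      have hs : Real.sqrt n * Real.sqrt (n+1) ≤ n + 1/2 := by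
        have := Real.sqrt_mul_self (by positivity : (0:ℝ) ≤ n)
        nlinarith [Real.sq_sqrt (by positivity : (0:ℝ) ≤ (n:ℝ)+1),
          Real.sq_sqrt (by positivity : (0:ℝ) ≤ (n:ℝ)), Real.sqrt_nonneg n,
          Real.sqrt_nonneg (n+1), sq_nonneg (Real.sqrt (n+1) - Real.sqrt n)]
      nlinarith [Real.sq_sqrt (by positivity : (0:ℝ) ≤ (n:ℝ)+1)]
    push_cast
    nlinarith [ih]

lemma sum_Icc_id_real (k : ℕ) : ∑ m ∈ Finset.Icc 1 k, (m : ℝ) = k * (k + 1) / 2 := by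
  induction k with
  | zero => simp
  | succ n ih =>
    rw [← Finset.Ico_add_one_right_eq_Icc] at ih ⊢
    rw [Finset.sum_Ico_succ_top (by omega), ih]
    push_cast; ring

lemma sum_inv_Icc_le (M : ℕ) : ∑ k ∈ Finset.Icc 1 M, (1:ℝ) / k ≤ 1 + Real.log M := by
  induction M with
  | zero => simp
  | succ n ih =>
    rw [← Finset.Ico_add_one_right_eq_Icc] at ih ⊢
    rw [Finset.sum_Ico_succ_top (by omega)]
    rcases Nat.eq_zero_or_pos n with hn | hn
    · subst hn; simp
    have hn' : (0:ℝ) < n := by positivity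
    have key : (1:ℝ) / (n+1) ≤ Real.log (n+1) - Real.log n := by
      rw [← Real.log_div (by positivity) (by positivity)]
      have h2 : Real.log ((n:ℝ)/(n+1)) ≤ (n:ℝ)/(n+1) - 1 :=
        Real.log_le_sub_one_of_pos (by positivity)
      rw [show ((n:ℝ)+1)/n = ((n:ℝ)/(n+1))⁻¹ by field_simp, Real.log_inv]
      have : (n:ℝ)/(n+1) - 1 = -(1/(n+1)) := by field_simp; ring
      linarith [h2.trans_eq this]
    push_cast
    push_cast at ih key
    linarith

lemma sum_log_telescope {m N : ℕ} (hm : 1 ≤ m) (h : m ≤ N) :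
    ∑ k ∈ Finset.Ico m N, (Real.log (k+1) - Real.log k) = Real.log N - Real.log m := by
  induction N with
  | zero => omega
  | succ n ih =>
    rcases Nat.lt_or_ge m (n+1) with hlt | hge
    · have hmn : m ≤ n := by omega
      rw [Finset.sum_Ico_succ_top hmn, ih hmn]
      push_cast; ring
    · have : m = n + 1 := by omega
      subst this; simp

lemma log_taylor_bound {k : ℕ} (hk : 2 ≤ k) :
    |Real.log (1 + 1/k) - (1/k - 1/(2*(k:ℝ)^2))| ≤ 1/((k:ℝ)^2*(k-1)) := by
  have hk0 : (0:ℝ) < k := by positivity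
  have hk1 : (1:ℝ) ≤ (k:ℝ) - 1 := by
    have : (2:ℝ) ≤ k := by exact_mod_cast hk
    linarith
  have habs : |(-(1/(k:ℝ)))| < 1 := by
    rw [abs_neg, abs_of_pos (by positivity)]
    rw [div_lt_one hk0]
    linarith
  have := Real.abs_log_sub_add_sum_range_le habs 2
  have hsum : ∑ i ∈ Finset.range 2, (-(1/(k:ℝ)))^(i+1)/(i+1)
      = -(1/k - 1/(2*(k:ℝ)^2)) := by
    rw [Finset.sum_range_succ, Finset.sum_range_succ, Finset.sum_range_zero]
    push_cast; ring
  rw [hsum] at this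
  have h1 : (1:ℝ) - -(1/k) = 1 + 1/k := by ring
  rw [h1] at this
  have h2 : -(1/(k:ℝ) - 1/(2*(k:ℝ)^2)) + Real.log (1+1/k)
      = Real.log (1+1/k) - (1/k - 1/(2*(k:ℝ)^2)) := by ring
  rw [h2] at this
  refine this.trans (le_of_eq ?_)
  rw [abs_neg, abs_of_pos (by positivity : (0:ℝ) < 1/(k:ℝ))]
  rw [eq_div_iff (by positivity : ((k:ℝ)^2*((k:ℝ)-1)) ≠ 0)]
  field_simp
  ring_nf; field_simp

lemma ak_bound {k : ℕ} (hk : 1 ≤ k) :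
    |(k:ℝ)*(k+1)/2 * Real.log (((k:ℝ)+1)/k) - ((k:ℝ)/2 + 1/4)| ≤ 3/k := by
  have hk0 : (0:ℝ) < k := by positivity
  have hlog : ((k:ℝ)+1)/k = 1 + 1/k := by field_simp
  rcases Nat.lt_or_ge k 2 with h2 | h2
  · have : k = 1 := by omega
    subst this
    norm_num
    rw [abs_le]
    have h1 : Real.log 2 ≤ 1 := by
      have := Real.log_le_sub_one_of_pos (by norm_num : (0:ℝ) < 2)
      linarith
    have h0 : (0:ℝ) ≤ Real.log 2 := Real.log_nonneg (by norm_num)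
    constructor <;> linarith
  · have hk1 : (1:ℝ) ≤ (k:ℝ) - 1 := by
      have : (2:ℝ) ≤ k := by exact_mod_cast h2
      linarith
    have ht := log_taylor_bound h2
    rw [hlog]
    have key : (k:ℝ)*(k+1)/2 * Real.log (1 + 1/k) - ((k:ℝ)/2 + 1/4)
        = (k:ℝ)*(k+1)/2 * (Real.log (1 + 1/k) - (1/k - 1/(2*(k:ℝ)^2))) - 1/(4*k) := by
      field_simp
      ring
    rw [key]
    have hb : |(k:ℝ)*(k+1)/2 * (Real.log (1 + 1/k) - (1/k - 1/(2*(k:ℝ)^2)))|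
        ≤ ((k:ℝ)+1)/(2*k*((k:ℝ)-1)) := by
      rw [abs_mul, abs_of_pos (by positivity : (0:ℝ) < (k:ℝ)*(k+1)/2)]
      calc (k:ℝ)*(k+1)/2 * |Real.log (1 + 1/k) - (1/k - 1/(2*(k:ℝ)^2))|
          ≤ (k:ℝ)*(k+1)/2 * (1/((k:ℝ)^2*(k-1))) := by
            apply mul_le_mul_of_nonneg_left ht (by positivity)
        _ = ((k:ℝ)+1)/(2*k*((k:ℝ)-1)) := by field_simp
    calc |(k:ℝ)*(k+1)/2 * (Real.log (1 + 1/k) - (1/k - 1/(2*(k:ℝ)^2))) - 1/(4*k)|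
        ≤ ((k:ℝ)+1)/(2*k*((k:ℝ)-1)) + 1/(4*k) := by
          refine (abs_sub _ _).trans ?_
          gcongr
          rw [abs_of_pos (by positivity : (0:ℝ) < 1/(4*(k:ℝ)))]
      _ ≤ 3/k := by
          rw [div_add_div _ _ (by positivity) (by positivity), div_le_div_iff₀ (by positivity) hk0]
          nlinarith

lemma T_bound {y : ℝ} (hy : 1 < y) : |T y - y^2/4| ≤ 5 * (1 + Real.log y) := by
  have hy0 : (0:ℝ) < y := by linarith
  set N : ℕ := ⌈y⌉₊ - 1 with hN
  have hceil : 2 ≤ ⌈y⌉₊ := by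
    have := Nat.lt_ceil.mpr (by exact_mod_cast hy : ((1:ℕ):ℝ) < y)
    omega
  have hN1 : 1 ≤ N := by omega
  have hNy : (N:ℝ) < y := Nat.lt_ceil.mp (by omega)
  have hN0 : (0:ℝ) < N := by exact_mod_cast hN1
  have hyN1 : y ≤ (N:ℝ) + 1 := by
    have := Nat.le_ceil y
    have hc : (⌈y⌉₊:ℝ) = (N:ℝ) + 1 := by
      have : ⌈y⌉₊ = N + 1 := by omega
      rw [this]; push_cast; ring
    linarith [hc ▸ this]
  have hlogy : 0 ≤ Real.log y := Real.log_nonneg hy.le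
  -- rewrite T as sum over Icc 1 N
  have hT : T y = ∑ m ∈ Finset.Icc 1 N, (m:ℝ) * Real.log (y/m) := by
    rw [T, S_eq_Icc]
  -- decompose log(y/m)
  have hdecomp : ∀ m ∈ Finset.Icc 1 N, (m:ℝ) * Real.log (y/m)
      = (∑ k ∈ Finset.Ico m N, (m:ℝ) * (Real.log (k+1) - Real.log k))
        + (m:ℝ) * (Real.log y - Real.log N) := by
    intro m hm
    rw [Finset.mem_Icc] at hm
    have hm0 : (0:ℝ) < m := by exact_mod_cast hm.1
    rw [← Finset.mul_sum, sum_log_telescope hm.1 hm.2,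
      Real.log_div (by positivity) (by positivity)]
    ring
  rw [hT, Finset.sum_congr rfl hdecomp, Finset.sum_add_distrib, ← Finset.sum_mul,
    sum_Icc_id_real]
  -- swap the double sum
  have hswap : ∑ m ∈ Finset.Icc 1 N, ∑ k ∈ Finset.Ico m N, (m:ℝ) * (Real.log (k+1) - Real.log k)
      = ∑ k ∈ Finset.Ico 1 N, (k:ℝ)*(k+1)/2 * (Real.log (k+1) - Real.log k) := by
    rw [← Finset.Ico_add_one_right_eq_Icc, Finset.sum_Ico_succ_top (by omega)]
    rw [Finset.Ico_self, Finset.sum_empty, add_zero]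
    rw [Finset.sum_Ico_Ico_comm]
    refine Finset.sum_congr rfl fun k hk => ?_
    rw [← Finset.sum_mul, Finset.Ico_add_one_right_eq_Icc, sum_Icc_id_real]
  rw [hswap]
  -- bound the k-sum
  have hksum : |∑ k ∈ Finset.Ico 1 N, (k:ℝ)*(k+1)/2 * (Real.log (k+1) - Real.log k)
      - ((N:ℝ)^2 - 1)/4| ≤ 3 * (1 + Real.log y) := by
    have hterm : ∀ k ∈ Finset.Ico 1 N,
        |(k:ℝ)*(k+1)/2 * (Real.log (k+1) - Real.log k) - ((k:ℝ)/2 + 1/4)| ≤ 3/k := by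
      intro k hk
      rw [Finset.mem_Ico] at hk
      have hk0 : (0:ℝ) < k := by exact_mod_cast hk.1
      have : Real.log (k+1) - Real.log k = Real.log (((k:ℝ)+1)/k) := by
        rw [Real.log_div (by positivity) (by positivity)]
      rw [this]
      exact ak_bound hk.1
    have hmain : ∑ k ∈ Finset.Ico 1 N, ((k:ℝ)/2 + 1/4) = ((N:ℝ)^2 - 1)/4 := by
      rw [Finset.sum_add_distrib]
      have h1 : ∑ k ∈ Finset.Ico 1 N, (k:ℝ)/2 = (∑ k ∈ Finset.Ico 1 N, (k:ℝ))/2 := by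
        rw [Finset.sum_div]
      have h2 : ∑ k ∈ Finset.Ico 1 N, (k:ℝ) = (N-1) * N / 2 := by
        have : Finset.Ico 1 N = Finset.Icc 1 (N-1) := by
          rw [← Finset.Ico_add_one_right_eq_Icc]
          congr 1
          omega
        rw [this, sum_Icc_id_real]
        have hc : ((N - 1 : ℕ):ℝ) = (N:ℝ) - 1 := by
          have : (1:ℕ) ≤ N := hN1
          push_cast [this]; ring
        rw [hc]; ring
      rw [h1, h2, Finset.sum_const, Nat.card_Ico]
      have hc : ((N - 1 : ℕ):ℝ) = (N:ℝ) - 1 := by push_cast [hN1]; ring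
      rw [nsmul_eq_mul, hc]
      ring
    calc |∑ k ∈ Finset.Ico 1 N, (k:ℝ)*(k+1)/2 * (Real.log (k+1) - Real.log k) - ((N:ℝ)^2-1)/4|
        = |∑ k ∈ Finset.Ico 1 N, ((k:ℝ)*(k+1)/2 * (Real.log (k+1) - Real.log k) - ((k:ℝ)/2 + 1/4))| := by
          rw [Finset.sum_sub_distrib, hmain]
      _ ≤ ∑ k ∈ Finset.Ico 1 N, |(k:ℝ)*(k+1)/2 * (Real.log (k+1) - Real.log k) - ((k:ℝ)/2 + 1/4)| :=
          Finset.abs_sum_le_sum_abs _ _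
      _ ≤ ∑ k ∈ Finset.Ico 1 N, 3/(k:ℝ) := Finset.sum_le_sum hterm
      _ = 3 * ∑ k ∈ Finset.Ico 1 N, 1/(k:ℝ) := by
          rw [Finset.mul_sum]; refine Finset.sum_congr rfl fun k _ => by ring
      _ ≤ 3 * (1 + Real.log (N-1:ℕ)) := by
          have : Finset.Ico 1 N = Finset.Icc 1 (N-1) := by
            rw [← Finset.Ico_add_one_right_eq_Icc]; congr 1; omega
          rw [this]
          have := sum_inv_Icc_le (N-1)
          linarith
      _ ≤ 3 * (1 + Real.log y) := by
          have hle : Real.log ((N-1:ℕ):ℝ) ≤ Real.log y := by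
            rcases Nat.eq_zero_or_pos (N-1) with h | h
            · rw [h]; simpa using hlogy
            · apply Real.log_le_log (by exact_mod_cast h)
              have : ((N-1:ℕ):ℝ) ≤ (N:ℝ) := by exact_mod_cast Nat.sub_le N 1
              linarith
          linarith
  -- bound the boundary term
  have hB : |(N:ℝ)*(N+1)/2 * (Real.log y - Real.log N) - (y^2 - (N:ℝ)^2)/4| ≤ 1 := by
    have hlogdiv : Real.log y - Real.log N = Real.log (y / N) := by
      rw [Real.log_div (by positivity) (by positivity)]
    have hup : Real.log (y / N) ≤ (y - N)/N := by
      have := Real.log_le_sub_one_of_pos (by positivity : (0:ℝ) < y/N)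
      have he : y/(N:ℝ) - 1 = (y - N)/N := by field_simp
      linarith [he ▸ this]
    have hlo : (y - N)/y ≤ Real.log (y / N) := by
      have h2 := Real.log_le_sub_one_of_pos (by positivity : (0:ℝ) < (N:ℝ)/y)
      have hinv : Real.log ((N:ℝ)/y) = - Real.log (y/N) := by
        rw [← Real.log_inv]
        congr 1
        field_simp
      have he : (N:ℝ)/y - 1 = -((y-N)/y) := by field_simp; ring
      rw [hinv, he] at h2
      linarith
    rw [hlogdiv, abs_le]
    constructor
    · -- lower: (y²-N²)/4 - B ≤ 1
      have : (N:ℝ)*(N+1)/2 * ((y-N)/y) ≤ (N:ℝ)*(N+1)/2 * Real.log (y/N) := by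
        apply mul_le_mul_of_nonneg_left hlo (by positivity)
      have hkey : (y^2 - (N:ℝ)^2)/4 - (N:ℝ)*(N+1)/2 * ((y-N)/y) ≤ 1 := by
        have he : (y^2 - (N:ℝ)^2)/4 - (N:ℝ)*(N+1)/2 * ((y-N)/y)
            = (y*(y^2-(N:ℝ)^2) - 2*N*(N+1)*(y-N))/(4*y) := by field_simp; ring
        rw [he, div_le_one (by positivity)]
        have hA : (0:ℝ) ≤ y - N := by linarith
        have hB : (0:ℝ) ≤ (N:ℝ) + 1 - y := by linarith
        nlinarith [mul_nonneg hA hB, mul_nonneg (mul_nonneg hA hB) hy0.le,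
          mul_nonneg (mul_nonneg hA hB) hN0.le, mul_nonneg hA hA, mul_nonneg (mul_nonneg hA hA) hN0.le]
      linarith
    · have : (N:ℝ)*(N+1)/2 * Real.log (y/N) ≤ (N:ℝ)*(N+1)/2 * ((y-N)/N) := by
        apply mul_le_mul_of_nonneg_left hup (by positivity)
      have hkey : (N:ℝ)*(N+1)/2 * ((y-N)/N) - (y^2 - (N:ℝ)^2)/4 ≤ 1 := by
        have he : (N:ℝ)*(N+1)/2 * ((y-N)/N) = (N+1)*(y-N)/2 := by field_simp
        rw [he]
        nlinarith
      linarith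
  -- combine
  have hid : ((N:ℝ)^2 - 1)/4 + (y^2 - (N:ℝ)^2)/4 + 1/4 = y^2/4 := by ring
  calc |∑ k ∈ Finset.Ico 1 N, (k:ℝ)*(k+1)/2 * (Real.log (k+1) - Real.log k)
        + (N:ℝ)*(N+1)/2 * (Real.log y - Real.log N) - y^2/4|
      ≤ |∑ k ∈ Finset.Ico 1 N, (k:ℝ)*(k+1)/2 * (Real.log (k+1) - Real.log k) - ((N:ℝ)^2-1)/4|
        + |(N:ℝ)*(N+1)/2 * (Real.log y - Real.log N) - (y^2 - (N:ℝ)^2)/4| + 1/4 := by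
        have habs := abs_add_le (∑ k ∈ Finset.Ico 1 N, (k:ℝ)*(k+1)/2 * (Real.log (k+1) - Real.log k) - ((N:ℝ)^2-1)/4)
          ((N:ℝ)*(N+1)/2 * (Real.log y - Real.log N) - (y^2 - (N:ℝ)^2)/4)
        have he : ∑ k ∈ Finset.Ico 1 N, (k:ℝ)*(k+1)/2 * (Real.log (k+1) - Real.log k)
            + (N:ℝ)*(N+1)/2 * (Real.log y - Real.log N) - y^2/4
            = (∑ k ∈ Finset.Ico 1 N, (k:ℝ)*(k+1)/2 * (Real.log (k+1) - Real.log k) - ((N:ℝ)^2-1)/4)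
            + ((N:ℝ)*(N+1)/2 * (Real.log y - Real.log N) - (y^2 - (N:ℝ)^2)/4) + (-(1/4)) := by
          ring
        rw [he]
        refine (abs_add_le _ _).trans ?_
        rw [abs_neg, abs_of_pos (by norm_num : (0:ℝ) < 1/4)]
        linarith
    _ ≤ 3 * (1 + Real.log y) + 1 + 1/4 := by linarith
    _ ≤ 5 * (1 + Real.log y) := by linarith

lemma summable_moebius_div_sq :
    Summable (fun d : ℕ => (ArithmeticFunction.moebius d : ℝ) / d^2) := by
  have hb : Summable (fun n : ℕ => 1/(n:ℝ)^2) := summable_one_div_nat_pow.mpr one_lt_two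
  refine Summable.of_abs (Summable.of_nonneg_of_le (fun n => abs_nonneg _) (fun n => ?_) hb)
  rcases Nat.eq_zero_or_pos n with h | h
  · simp [h]
  · rw [abs_div, abs_of_pos (by positivity : (0:ℝ) < (n:ℝ)^2)]
    apply div_le_div_of_nonneg_right ?_ (by positivity)
    have hm : |(ArithmeticFunction.moebius n : ℤ)| ≤ 1 := by
      rw [ArithmeticFunction.abs_moebius]
      split <;> norm_num
    calc |((ArithmeticFunction.moebius n : ℤ) : ℝ)| = ((|(ArithmeticFunction.moebius n : ℤ)| : ℤ) : ℝ) := by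
          push_cast; rfl
      _ ≤ 1 := by exact_mod_cast hm

lemma hasSum_moebius_div_sq :
    HasSum (fun d : ℕ => (ArithmeticFunction.moebius d : ℝ) / d^2) (6/π^2) := by
  have hsum := summable_moebius_div_sq
  set c : ℝ := ∑' d : ℕ, (ArithmeticFunction.moebius d : ℝ) / d^2 with hc
  have hs : HasSum (fun d : ℕ => (ArithmeticFunction.moebius d : ℝ) / d^2) c := hsum.hasSum
  suffices hcval : c = 6/π^2 by rwa [hcval] at hs
  have hsC : HasSum (fun d : ℕ => ((↑((ArithmeticFunction.moebius d : ℝ) / d^2)) : ℂ)) (c:ℂ) :=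
    Complex.ofRealCLM.hasSum hs
  have hterm : (fun d : ℕ => ((↑((ArithmeticFunction.moebius d : ℝ) / d^2)) : ℂ))
      = LSeries.term (fun n => ((ArithmeticFunction.moebius n : ℤ) : ℂ)) 2 := by
    funext n
    rcases Nat.eq_zero_or_pos n with h | h
    · simp [h, LSeries.term_zero]
    · rw [LSeries.term_of_ne_zero (by omega)]
      have : ((n:ℂ)) ^ (2:ℂ) = ((n:ℂ))^(2:ℕ) := by
        rw [show ((2:ℂ)) = ((2:ℕ):ℂ) by norm_num, Complex.cpow_natCast]
      rw [this]
      push_cast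
      ring
  rw [hterm] at hsC
  have hL : LSeries (fun n => ((ArithmeticFunction.moebius n : ℤ) : ℂ)) 2 = (c:ℂ) := hsC.tsum_eq
  have hre : (1:ℝ) < (2:ℂ).re := by norm_num
  have hmul := ArithmeticFunction.LSeries_zeta_mul_Lseries_moebius hre
  rw [ArithmeticFunction.LSeries_zeta_eq_riemannZeta hre, riemannZeta_two, hL] at hmul
  have hpi : (π:ℂ) ≠ 0 := by exact_mod_cast Real.pi_ne_zero
  have : (c:ℂ) = 6/(π:ℂ)^2 := by
    rw [eq_div_iff (pow_ne_zero 2 hpi)]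
    linear_combination (6:ℂ) * hmul
  exact_mod_cast this

lemma moebius_partial_bound {x : ℝ} (hx : 2 ≤ x) :
    |∑ d ∈ S x, (ArithmeticFunction.moebius d : ℝ) / d^2 - 6/π^2| ≤ 2/x := by
  set f : ℕ → ℝ := fun d => (ArithmeticFunction.moebius d : ℝ) / d^2 with hf
  set K : ℕ := ⌈x⌉₊ - 1 with hK
  have hceil : 2 ≤ ⌈x⌉₊ := by
    have : ((1:ℕ):ℝ) < x := by exact_mod_cast (by linarith : (1:ℝ) < x)
    have := Nat.lt_ceil.mpr this
    omega
  have hK1 : 1 ≤ K := by omega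
  have hKx : x - 1 ≤ (K:ℝ) := by
    have h1 : x ≤ (⌈x⌉₊:ℝ) := Nat.le_ceil x
    have h2 : (⌈x⌉₊:ℝ) = (K:ℝ) + 1 := by
      have : ⌈x⌉₊ = K + 1 := by omega
      rw [this]; push_cast; ring
    linarith
  have hK0 : (0:ℝ) < K := by linarith
  -- partial sum over S x equals sum over range (K+1)
  have hSsum : ∑ d ∈ S x, f d = ∑ d ∈ Finset.range (K+1), f d := by
    rw [S_eq_Icc, ← Finset.Ico_add_one_right_eq_Icc, Finset.range_eq_Ico,
      Finset.sum_eq_sum_Ico_succ_bot (by omega : 0 < K + 1)]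
    have : f 0 = 0 := by simp [hf]
    rw [this, zero_add]
  have htail := ((Summable.sum_add_tsum_nat_add (K+1) summable_moebius_div_sq)).symm
  -- 6/π² = partial + tail
  have h6 : 6/π^2 = ∑ d ∈ Finset.range (K+1), f d + ∑' i : ℕ, f (i + (K+1)) := by
    rw [← hasSum_moebius_div_sq.tsum_eq]
    exact htail
  rw [hSsum, h6]
  have he : ∑ d ∈ Finset.range (K+1), f d - (∑ d ∈ Finset.range (K+1), f d + ∑' i : ℕ, f (i + (K+1)))
      = -(∑' i : ℕ, f (i + (K+1))) := by ring
  rw [he, abs_neg]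
  -- bound the tail
  set g : ℕ → ℝ := fun i => 1/((K:ℝ)+i) - 1/((K:ℝ)+i+1) with hg
  have hgnn : ∀ i, 0 ≤ g i := by
    intro i
    have h1 : (0:ℝ) < (K:ℝ)+i := by positivity
    have h2 : (0:ℝ) < (K:ℝ)+i+1 := by positivity
    rw [hg]
    simp only
    rw [sub_nonneg]
    apply div_le_div_of_nonneg_left (by norm_num) h1
    linarith
  have hgsum : ∀ n, ∑ i ∈ Finset.range n, g i ≤ 1/K := by
    intro n
    have : ∑ i ∈ Finset.range n, g i = 1/(K:ℝ) - 1/((K:ℝ)+n) := by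
      induction n with
      | zero => simp
      | succ m ih =>
        rw [Finset.sum_range_succ, ih, hg]
        push_cast
        ring
    rw [this]
    have : (0:ℝ) < (K:ℝ)+n := by positivity
    have : 0 ≤ 1/((K:ℝ)+n) := by positivity
    linarith
  have hgsummable : Summable g :=
    summable_of_sum_range_le hgnn hgsum
  have habs_le : ∀ i : ℕ, |f (i + (K+1))| ≤ g i := by
    intro i
    have hd : 1 ≤ i + (K+1) := by omega
    have hd0 : (0:ℝ) < ((i + (K+1) : ℕ):ℝ) := by exact_mod_cast hd
    rw [hf]
    simp only
    rw [abs_div, abs_of_pos (by positivity : (0:ℝ) < ((i + (K+1):ℕ):ℝ)^2)]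
    have hm : |((ArithmeticFunction.moebius (i + (K+1)) : ℤ) : ℝ)| ≤ 1 := by
      have hm' : |(ArithmeticFunction.moebius (i + (K+1)) : ℤ)| ≤ 1 := by
        rw [ArithmeticFunction.abs_moebius]
        split <;> norm_num
      calc |((ArithmeticFunction.moebius (i + (K+1)) : ℤ) : ℝ)|
          = ((|(ArithmeticFunction.moebius (i + (K+1)) : ℤ)| : ℤ) : ℝ) := by push_cast; rfl
        _ ≤ 1 := by exact_mod_cast hm'
    have hcast : ((i + (K+1) : ℕ):ℝ) = (K:ℝ) + i + 1 := by push_cast; ring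
    calc |((ArithmeticFunction.moebius (i + (K+1)) : ℤ) : ℝ)| / ((i + (K+1):ℕ):ℝ)^2
        ≤ 1 / ((i + (K+1):ℕ):ℝ)^2 := by
          apply div_le_div_of_nonneg_right hm (by positivity)
      _ ≤ g i := by
          rw [hcast, hg]
          simp only
          rw [div_sub_div _ _ (by positivity : ((K:ℝ)+i) ≠ 0) (by positivity : ((K:ℝ)+i+1) ≠ 0)]
          have he2 : (1:ℝ) * ((K:ℝ)+i+1) - ((K:ℝ)+i) * 1 = 1 := by ring
          rw [he2]
          apply div_le_div_of_nonneg_left (by norm_num) (by positivity)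
          nlinarith [hK0, (by positivity : (0:ℝ) ≤ (i:ℝ))]
  have hftail : Summable (fun i : ℕ => f (i + (K+1))) := by
    exact (summable_nat_add_iff (K+1)).mpr summable_moebius_div_sq
  calc |∑' i : ℕ, f (i + (K+1))| ≤ ∑' i : ℕ, |f (i + (K+1))| := by
        rw [← Real.norm_eq_abs]
        refine (norm_tsum_le_tsum_norm ?_).trans (le_of_eq ?_)
        · simpa [Real.norm_eq_abs] using hftail.abs
        · simp [Real.norm_eq_abs]
    _ ≤ ∑' i : ℕ, g i := Summable.tsum_le_tsum habs_le hftail.abs hgsummable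
    _ ≤ 1/K := Real.tsum_le_of_sum_range_le hgnn hgsum
    _ ≤ 2/x := by
        rw [div_le_div_iff₀ hK0 (by linarith)]
        linarith

lemma phi_eq {q : ℕ} (hq : 0 < q) :
    (Nat.totient q : ℝ) = ∑ p ∈ q.divisorsAntidiagonal, (moebius p.1 : ℝ) * p.2 := by
  have h := (ArithmeticFunction.sum_eq_iff_sum_mul_moebius_eq
    (R := ℝ) (f := fun n => (Nat.totient n : ℝ)) (g := fun n => (n : ℝ))).mp ?_ q hq
  · exact h.symm
  · intro n hn
    rw [← Nat.cast_sum]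
    exact_mod_cast congrArg (Nat.cast : ℕ → ℝ) (Nat.sum_totient n)

lemma main_rearrange {x : ℝ} (hx : 2 ≤ x) :
    ∑ q ∈ S x, (Nat.totient q : ℝ) * Real.log (x / q)
      = ∑ d ∈ S x, (moebius d : ℝ) * T (x / d) := by
  have hx0 : (0:ℝ) < x := by linarith
  -- step 1: expand totient
  have h1 : ∑ q ∈ S x, (Nat.totient q : ℝ) * Real.log (x / q)
      = ∑ q ∈ S x, ∑ p ∈ q.divisorsAntidiagonal,
          (moebius p.1 : ℝ) * p.2 * Real.log (x / (p.1 * p.2)) := by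
    refine Finset.sum_congr rfl fun q hq => ?_
    rw [mem_S] at hq
    rw [phi_eq hq.1, Finset.sum_mul]
    refine Finset.sum_congr rfl fun p hp => ?_
    rw [Nat.mem_divisorsAntidiagonal] at hp
    rw [← hp.1]
    push_cast
    ring
  rw [h1]
  -- step 2: biUnion
  have hdisj : ∀ a ∈ S x, ∀ b ∈ S x, a ≠ b →
      Disjoint (a.divisorsAntidiagonal) (b.divisorsAntidiagonal) := by
    intro a _ b _ hab
    rw [Finset.disjoint_left]
    intro p hpa hpb
    rw [Nat.mem_divisorsAntidiagonal] at hpa hpb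
    exact hab (hpa.1.symm.trans hpb.1)
  rw [← Finset.sum_biUnion hdisj]
  -- step 3: identify the biUnion
  have hbi : (S x).biUnion (fun q => q.divisorsAntidiagonal)
      = ((S x) ×ˢ (S x)).filter (fun p : ℕ × ℕ => ((p.1 * p.2 : ℕ) : ℝ) < x) := by
    ext p
    rw [Finset.mem_biUnion, Finset.mem_filter, Finset.mem_product]
    constructor
    · rintro ⟨q, hq, hp⟩
      rw [Nat.mem_divisorsAntidiagonal] at hp
      rw [mem_S] at hq
      obtain ⟨hpq, hq0⟩ := hp
      have hne : p.1 ≠ 0 ∧ p.2 ≠ 0 := by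
        refine Nat.mul_ne_zero_iff.mp ?_
        rw [hpq]; exact hq0
      have hp1 : 1 ≤ p.1 := Nat.one_le_iff_ne_zero.mpr hne.1
      have hp2 : 1 ≤ p.2 := Nat.one_le_iff_ne_zero.mpr hne.2
      have hple : ((p.1:ℕ):ℝ) < x := by
        have : p.1 ≤ q := by
          rw [← hpq]
          exact Nat.le_mul_of_pos_right _ hp2
        calc ((p.1:ℕ):ℝ) ≤ (q:ℝ) := by exact_mod_cast this
          _ < x := hq.2
      have hp2le : ((p.2:ℕ):ℝ) < x := by
        have : p.2 ≤ q := by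
          rw [← hpq]
          exact Nat.le_mul_of_pos_left _ hp1
        calc ((p.2:ℕ):ℝ) ≤ (q:ℝ) := by exact_mod_cast this
          _ < x := hq.2
      refine ⟨⟨mem_S.mpr ⟨hp1, hple⟩, mem_S.mpr ⟨hp2, hp2le⟩⟩, ?_⟩
      rw [hpq]; exact hq.2
    · rintro ⟨⟨h1', h2'⟩, h3⟩
      rw [mem_S] at h1' h2'
      refine ⟨p.1 * p.2, mem_S.mpr ⟨?_, h3⟩, ?_⟩
      · exact Nat.one_le_iff_ne_zero.mpr (Nat.mul_ne_zero (by omega) (by omega))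
      · rw [Nat.mem_divisorsAntidiagonal]
        exact ⟨rfl, Nat.mul_ne_zero (by omega) (by omega)⟩
  rw [hbi]
  -- step 4: filtered product to iterated sum
  rw [Finset.sum_filter, Finset.sum_product]
  refine Finset.sum_congr rfl fun d hd => ?_
  rw [mem_S] at hd
  have hd0 : (0:ℝ) < d := by exact_mod_cast hd.1
  -- inner: ∑ m ∈ S x, ite ((d*m:ℝ) < x) (μ d * m * log (x/(d*m))) 0 = μ d * T (x/d)
  rw [T, Finset.mul_sum, ← Finset.sum_filter]
  have hset : (S x).filter (fun m => ((d * m : ℕ) : ℝ) < x) = S (x / d) := by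
    ext m
    rw [Finset.mem_filter, mem_S, mem_S]
    constructor
    · rintro ⟨⟨hm1, _⟩, hmd⟩
      refine ⟨hm1, ?_⟩
      rw [lt_div_iff₀ hd0, mul_comm]
      exact_mod_cast hmd
    · rintro ⟨hm1, hm2⟩
      have hmx : (m:ℝ) < x := by
        calc (m:ℝ) < x / d := hm2
          _ ≤ x := by
            rw [div_le_iff₀ hd0]
            have hd1 : (1:ℝ) ≤ d := by exact_mod_cast hd.1
            nlinarith
      refine ⟨⟨hm1, hmx⟩, ?_⟩
      push_cast
      rw [mul_comm]
      exact_mod_cast (lt_div_iff₀ hd0).mp hm2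
  rw [hset]
  refine Finset.sum_congr rfl fun m hm => ?_
  rw [mem_S] at hm
  simp only
  rw [show x / ((d:ℝ) * m) = x / d / m from (div_div x (d:ℝ) (m:ℝ)).symm]
  ring
end
end TLSA

open TLSA in
theorem totient_log_sum_asymptotic :
    ∃ C : ℝ, 0 < C ∧ ∀ x : ℝ, 2 ≤ x →
      |(∑ q ∈ (Finset.Icc 1 ⌊x⌋₊).filter (fun q : ℕ => (q : ℝ) < x),
          (Nat.totient q : ℝ) * Real.log (x / q))
        - 3 * x ^ 2 / (2 * π ^ 2)| ≤ C * x := by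
  refine ⟨26, by norm_num, fun x hx => ?_⟩
  have hx0 : (0:ℝ) < x := by linarith
  have hS : (Finset.Icc 1 ⌊x⌋₊).filter (fun q : ℕ => (q : ℝ) < x) = S x := rfl
  rw [hS, main_rearrange hx]
  -- split into main term and error term
  have hsplit : ∑ d ∈ S x, (moebius d : ℝ) * T (x / d)
      = (x^2/4) * (∑ d ∈ S x, (moebius d : ℝ) / d^2)
        + ∑ d ∈ S x, (moebius d : ℝ) * (T (x/d) - (x/d)^2/4) := by
    rw [Finset.mul_sum, ← Finset.sum_add_distrib]
    refine Finset.sum_congr rfl fun d hd => ?_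
    rw [mem_S] at hd
    have hd0 : (0:ℝ) < d := by exact_mod_cast hd.1
    field_simp
    ring
  rw [hsplit]
  have hmain : |(x^2/4) * (∑ d ∈ S x, (moebius d : ℝ) / d^2) - 3 * x^2 / (2 * π^2)|
      ≤ x/2 := by
    have hpi : (0:ℝ) < π := Real.pi_pos
    have he : (x^2/4) * (∑ d ∈ S x, (moebius d : ℝ) / d^2) - 3 * x^2 / (2 * π^2)
        = (x^2/4) * ((∑ d ∈ S x, (moebius d : ℝ) / d^2) - 6/π^2) := by
      field_simp
      ring
    rw [he, abs_mul, abs_of_pos (by positivity : (0:ℝ) < x^2/4)]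
    calc x^2/4 * |(∑ d ∈ S x, (moebius d : ℝ) / d^2) - 6/π^2|
        ≤ x^2/4 * (2/x) := by
          apply mul_le_mul_of_nonneg_left (moebius_partial_bound hx) (by positivity)
      _ = x/2 := by field_simp; ring
  have herr : |∑ d ∈ S x, (moebius d : ℝ) * (T (x/d) - (x/d)^2/4)| ≤ 25 * x := by
    set K : ℕ := ⌈x⌉₊ - 1 with hK
    have hceil : 2 ≤ ⌈x⌉₊ := by
      have : ((1:ℕ):ℝ) < x := by exact_mod_cast (by linarith : (1:ℝ) < x)
      have := Nat.lt_ceil.mpr this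
      omega
    have hKx : (K:ℝ) < x := Nat.lt_ceil.mp (by omega)
    have hK0 : 0 ≤ (K:ℝ) := by positivity
    have hmu : ∀ d : ℕ, |(moebius d : ℝ)| ≤ 1 := by
      intro d
      have hm' : |(ArithmeticFunction.moebius d : ℤ)| ≤ 1 := by
        rw [ArithmeticFunction.abs_moebius]
        split <;> norm_num
      calc |((moebius d : ℤ) : ℝ)| = ((|(moebius d : ℤ)| : ℤ) : ℝ) := by push_cast; rfl
        _ ≤ 1 := by exact_mod_cast hm'
    calc |∑ d ∈ S x, (moebius d : ℝ) * (T (x/d) - (x/d)^2/4)|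
        ≤ ∑ d ∈ S x, |(moebius d : ℝ) * (T (x/d) - (x/d)^2/4)| :=
          Finset.abs_sum_le_sum_abs _ _
      _ ≤ ∑ d ∈ S x, 5 * (1 + Real.log (x/d)) := by
          refine Finset.sum_le_sum fun d hd => ?_
          rw [mem_S] at hd
          have hd1 : (1:ℝ) ≤ d := by exact_mod_cast hd.1
          have hyd : 1 < x / d := by
            rw [lt_div_iff₀ (by linarith)]
            linarith [hd.2]
          rw [abs_mul]
          calc |(moebius d : ℝ)| * |T (x/d) - (x/d)^2/4|
              ≤ 1 * (5 * (1 + Real.log (x/d))) := by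
                apply mul_le_mul (hmu d) (T_bound hyd) (abs_nonneg _) (by norm_num)
            _ = 5 * (1 + Real.log (x/d)) := by ring
      _ = 5 * (S x).card + 5 * ∑ d ∈ S x, Real.log (x/d) := by
          rw [show (fun d : ℕ => 5 * (1 + Real.log (x / d)))
              = fun d : ℕ => 5 + 5 * Real.log (x / d) by funext d; ring]
          rw [Finset.sum_add_distrib, Finset.sum_const, nsmul_eq_mul, Finset.mul_sum]
          ring
      _ ≤ 5 * x + 5 * (4 * x) := by
          have hcard : ((S x).card : ℝ) ≤ x := by
            rw [S_eq_Icc, Nat.card_Icc]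
            have : (K + 1 - 1 : ℕ) = K := by omega
            rw [this]
            linarith
          have hlogsum : ∑ d ∈ S x, Real.log (x/d) ≤ 4 * x := by
            have hstep : ∀ d ∈ S x, Real.log (x/d) ≤ 2 * Real.sqrt x * (1 / Real.sqrt d) := by
              intro d hd
              rw [mem_S] at hd
              have hd1 : (1:ℝ) ≤ d := by exact_mod_cast hd.1
              have hxd : (0:ℝ) < x / d := by positivity
              calc Real.log (x/d) ≤ 2 * Real.sqrt (x/d) := log_le_two_sqrt hxd
                _ = 2 * Real.sqrt x * (1 / Real.sqrt d) := by
                    rw [Real.sqrt_div hx0.le]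
                    have : (0:ℝ) < Real.sqrt d := Real.sqrt_pos.mpr (by linarith)
                    field_simp
            calc ∑ d ∈ S x, Real.log (x/d)
                ≤ ∑ d ∈ S x, 2 * Real.sqrt x * (1 / Real.sqrt d) :=
                  Finset.sum_le_sum hstep
              _ = 2 * Real.sqrt x * ∑ d ∈ S x, 1 / Real.sqrt d := by
                  rw [Finset.mul_sum]
              _ ≤ 2 * Real.sqrt x * (2 * Real.sqrt K) := by
                  apply mul_le_mul_of_nonneg_left ?_ (by positivity)
                  rw [S_eq_Icc]
                  exact sum_inv_sqrt K
              _ ≤ 2 * Real.sqrt x * (2 * Real.sqrt x) := by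
                  have := Real.sqrt_le_sqrt hKx.le
                  gcongr
              _ = 4 * x := by
                  rw [show 2 * Real.sqrt x * (2 * Real.sqrt x) = 4 * (Real.sqrt x * Real.sqrt x) by ring,
                    Real.mul_self_sqrt hx0.le]
          linarith
      _ = 25 * x := by ring
  calc |(x^2/4) * (∑ d ∈ S x, (moebius d : ℝ) / d^2)
        + ∑ d ∈ S x, (moebius d : ℝ) * (T (x/d) - (x/d)^2/4) - 3 * x^2 / (2 * π^2)|
      ≤ |(x^2/4) * (∑ d ∈ S x, (moebius d : ℝ) / d^2) - 3 * x^2 / (2 * π^2)|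
        + |∑ d ∈ S x, (moebius d : ℝ) * (T (x/d) - (x/d)^2/4)| := by
        have he : (x^2/4) * (∑ d ∈ S x, (moebius d : ℝ) / d^2)
            + ∑ d ∈ S x, (moebius d : ℝ) * (T (x/d) - (x/d)^2/4) - 3 * x^2 / (2 * π^2)
            = ((x^2/4) * (∑ d ∈ S x, (moebius d : ℝ) / d^2) - 3 * x^2 / (2 * π^2))
              + ∑ d ∈ S x, (moebius d : ℝ) * (T (x/d) - (x/d)^2/4) := by ring
        rw [he]
        exact abs_add_le _ _
    _ ≤ x/2 + 25 * x := by linarith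
    _ ≤ 26 * x := by linarith
end

section
/- For fixed σ₀ > 2 and real y > 0, the contour integral (1/(2πi)) ∫_{σ₀−i∞}^{σ₀+i∞} y^s / s² ds equals 0 if 0 < y ≤ 1, and equals log y if y > 1. -/
open Complex MeasureTheory
open Filter

-- integrability of x^(s-1) * (-log x) on (0,1]
lemma perron_integrableOn {s : ℂ} (hs : 0 < s.re) :
    IntegrableOn (fun x : ℝ => (x : ℂ) ^ (s - 1) * (-(Real.log x : ℂ)))
      (Set.Ioc 0 1) := by
  have hcont : ContinuousOn (fun x : ℝ => (x : ℂ) ^ (s - 1) * (-(Real.log x : ℂ)))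
      (Set.Ioc 0 1) := by
    intro x hx
    have hx0 : x ≠ 0 := ne_of_gt hx.1
    exact ((Complex.continuousAt_ofReal_cpow_const x (s-1) (Or.inr hx0)).mul
      ((Complex.continuous_ofReal.continuousAt.comp
        (Real.continuousAt_log hx0)).neg)).continuousWithinAt
  have hmaj : IntegrableOn (fun x : ℝ => (2 / s.re) * x ^ (s.re / 2 - 1)) (Set.Ioc 0 1) := by
    have : IntervalIntegrable (fun x : ℝ => x ^ (s.re / 2 - 1)) volume 0 1 :=
      intervalIntegral.intervalIntegrable_rpow' (by linarith)
    exact ((intervalIntegrable_iff_integrableOn_Ioc_of_le zero_le_one).mp this).const_mul _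
  refine Integrable.mono hmaj (hcont.aestronglyMeasurable measurableSet_Ioc) ?_
  filter_upwards [ae_restrict_mem measurableSet_Ioc] with x hx
  have hx0 : (0:ℝ) < x := hx.1
  have hnorm : ‖(x : ℂ) ^ (s - 1) * (-(Real.log x : ℂ))‖
      = x ^ (s.re - 1) * |Real.log x| := by
    rw [norm_mul, Complex.norm_cpow_eq_rpow_re_of_pos hx0]
    simp [Complex.sub_re, Real.norm_eq_abs]
  rw [hnorm]
  have hsplit : x ^ (s.re - 1) = x ^ (s.re / 2 - 1) * x ^ (s.re / 2) := by
    rw [← Real.rpow_add hx0]; ring_nf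
  have hlt : |Real.log x * x ^ (s.re / 2)| < 1 / (s.re / 2) :=
    Real.abs_log_mul_self_rpow_lt x (s.re / 2) hx0 hx.2 (by linarith)
  have h1 : x ^ (s.re - 1) * |Real.log x|
      = x ^ (s.re / 2 - 1) * |Real.log x * x ^ (s.re / 2)| := by
    rw [hsplit, abs_mul, _root_.abs_of_nonneg (Real.rpow_nonneg hx0.le _)]
    ring
  rw [h1]
  have h2 : (0:ℝ) ≤ x ^ (s.re / 2 - 1) := Real.rpow_nonneg hx0.le _
  have : x ^ (s.re / 2 - 1) * |Real.log x * x ^ (s.re / 2)|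
      ≤ x ^ (s.re / 2 - 1) * (2 / s.re) := by
    refine mul_le_mul_of_nonneg_left ?_ h2
    calc |Real.log x * x ^ (s.re / 2)| ≤ 1 / (s.re / 2) := hlt.le
      _ = 2 / s.re := by field_simp
  refine this.trans (le_of_eq ?_)
  rw [Real.norm_eq_abs, _root_.abs_of_nonneg (by positivity)]
  ring

lemma perron_hasDerivAt {s : ℂ} (hs0 : s ≠ 0) {x : ℝ} (hx : 0 < x) :
    HasDerivAt (fun x : ℝ => (x : ℂ) ^ s * (1 / s ^ 2 - Real.log x / s))
      ((x : ℂ) ^ (s - 1) * (-(Real.log x : ℂ))) x := by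
  have hx0 : x ≠ 0 := ne_of_gt hx
  have hs1 : s - 1 ≠ -1 := by
    intro h; apply hs0; linear_combination h
  have hpow : HasDerivAt (fun y : ℝ => (y : ℂ) ^ s / s) ((x : ℂ) ^ (s - 1)) x := by
    have := hasDerivAt_ofReal_cpow_const' hx0 hs1
    simpa using this
  have hpow' : HasDerivAt (fun y : ℝ => (y : ℂ) ^ s) (s * (x : ℂ) ^ (s - 1)) x := by
    have h := hpow.const_mul s
    have : (fun y : ℝ => s * ((y : ℂ) ^ s / s)) = fun y : ℝ => (y : ℂ) ^ s := by
      funext y; field_simp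
    rwa [this] at h
  have hlog : HasDerivAt (fun y : ℝ => ((Real.log y : ℝ) : ℂ)) ((x⁻¹ : ℝ) : ℂ) x :=
    (Real.hasDerivAt_log hx0).ofReal_comp
  have hinner : HasDerivAt (fun y : ℝ => (1 / s ^ 2 - Real.log y / s : ℂ))
      (-(((x⁻¹ : ℝ) : ℂ) / s)) x := by
    have := (hlog.div_const s).const_sub (1 / s ^ 2)
    simpa using this
  have hF := hpow'.mul hinner
  convert hF using 1
  · rfl
  · rfl
  have hxs : (x : ℂ) ^ (s - 1) = (x : ℂ) ^ s / x := by
    rw [Complex.cpow_sub _ _ (by exact_mod_cast hx0), Complex.cpow_one]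
  rw [hxs]
  have hxc : (x : ℂ) ≠ 0 := by exact_mod_cast hx0
  push_cast
  have h : s * s⁻¹ = 1 := mul_inv_cancel₀ hs0
  simp only [div_eq_mul_inv, one_mul, pow_two, mul_inv]
  linear_combination ((x:ℂ) ^ s * (x:ℂ)⁻¹ * ((Real.log x : ℂ) - s⁻¹)) * h

lemma perron_tendsto_zero {s : ℂ} (hs : 0 < s.re) :
    Tendsto (fun x : ℝ => (x : ℂ) ^ s * (1 / s ^ 2 - Real.log x / s))
      (nhdsWithin 0 (Set.Ioi 0)) (nhds 0) := by
  have hrpow : Tendsto (fun a : ℝ => a ^ s.re) (nhdsWithin 0 (Set.Ioi 0)) (nhds 0) := by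
    have h := (Real.continuousAt_rpow_const 0 s.re (Or.inr hs.le)).tendsto
    rw [Real.zero_rpow (ne_of_gt hs)] at h
    exact h.mono_left nhdsWithin_le_nhds
  have T1 : Tendsto (fun a : ℝ => (a : ℂ) ^ s) (nhdsWithin 0 (Set.Ioi 0)) (nhds 0) := by
    apply squeeze_zero_norm' _ hrpow
    filter_upwards [self_mem_nhdsWithin] with a (ha : (0:ℝ) < a)
    rw [Complex.norm_cpow_eq_rpow_re_of_pos ha]
  have T2 : Tendsto (fun a : ℝ => (a : ℂ) ^ s * (Real.log a : ℂ))
      (nhdsWithin 0 (Set.Ioi 0)) (nhds 0) := by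
    have hlm := (tendsto_log_mul_rpow_nhdsGT_zero hs).abs
    rw [abs_zero] at hlm
    apply squeeze_zero_norm' _ hlm
    filter_upwards [self_mem_nhdsWithin] with a (ha : (0:ℝ) < a)
    rw [norm_mul, Complex.norm_cpow_eq_rpow_re_of_pos ha,
      Complex.norm_real, Real.norm_eq_abs, abs_mul,
      _root_.abs_of_nonneg (Real.rpow_nonneg ha.le _)]
    exact le_of_eq (by ring)
  have := (T1.mul_const (1 / s ^ 2)).sub (T2.mul_const (1 / s))
  rw [zero_mul, zero_mul, sub_zero] at this
  refine this.congr fun a => ?_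
  ring

lemma perron_integral_Ioc {s : ℂ} (hs : 0 < s.re) :
    ∫ x in Set.Ioc (0:ℝ) 1, (x : ℂ) ^ (s - 1) * (-(Real.log x : ℂ)) = 1 / s ^ 2 := by
  have hs0 : s ≠ 0 := fun h => by simp [h] at hs
  set F : ℝ → ℂ := fun x => (x : ℂ) ^ s * (1 / s ^ 2 - Real.log x / s) with hF
  set g : ℝ → ℂ := fun x => (x : ℂ) ^ (s - 1) * (-(Real.log x : ℂ)) with hg
  have hcover : AECover (volume.restrict (Set.Ioc (0:ℝ) 1)) (nhdsWithin 0 (Set.Ioi 0))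
      (fun a => Set.Ioi a) := by
    constructor
    · refine (ae_restrict_iff' measurableSet_Ioc).mpr (ae_of_all _ fun x hx => ?_)
      have : ∀ᶠ a in nhds (0:ℝ), a < x := eventually_lt_nhds hx.1
      exact (this.filter_mono nhdsWithin_le_nhds).mono fun a ha => ha
    · exact fun i => measurableSet_Ioi
  have key := hcover.integral_tendsto_of_countably_generated (perron_integrableOn hs)
  have heq : ∀ᶠ a in nhdsWithin (0:ℝ) (Set.Ioi 0),
      ∫ x in Set.Ioi a, g x ∂(volume.restrict (Set.Ioc 0 1)) = F 1 - F a := by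
    filter_upwards [self_mem_nhdsWithin,
      (eventually_lt_nhds one_pos).filter_mono nhdsWithin_le_nhds] with a
      (ha : (0:ℝ) < a) (ha1 : a < 1)
    rw [Measure.restrict_restrict measurableSet_Ioi]
    have hset : Set.Ioi a ∩ Set.Ioc 0 1 = Set.Ioc a 1 := by
      ext x
      simp only [Set.mem_inter_iff, Set.mem_Ioi, Set.mem_Ioc]
      constructor
      · rintro ⟨h1, _, h3⟩; exact ⟨h1, h3⟩
      · rintro ⟨h1, h2⟩; exact ⟨h1, lt_trans ha h1, h2⟩
    rw [hset, ← intervalIntegral.integral_of_le ha1.le]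
    have hint : IntervalIntegrable g volume a 1 := by
      rw [intervalIntegrable_iff_integrableOn_Ioc_of_le ha1.le]
      exact (perron_integrableOn hs).mono_set (Set.Ioc_subset_Ioc ha.le le_rfl)
    refine intervalIntegral.integral_eq_sub_of_hasDerivAt (fun x hx => ?_) hint
    rw [Set.uIcc_of_le ha1.le] at hx
    exact perron_hasDerivAt hs0 (lt_of_lt_of_le ha hx.1)
  have hlim : Tendsto (fun a : ℝ => F 1 - F a) (nhdsWithin 0 (Set.Ioi 0)) (nhds (F 1)) := by
    have := (tendsto_const_nhds (x := F 1)).sub (perron_tendsto_zero hs)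
    rwa [sub_zero] at this
  have := tendsto_nhds_unique (key.congr' heq) hlim
  rw [this, hF]
  simp [Real.log_one]

noncomputable def perronF : ℝ → ℂ := fun t => ((max (-Real.log t) 0 : ℝ) : ℂ)

lemma perronF_eq_on_Ioc {t : ℝ} (ht : t ∈ Set.Ioc (0:ℝ) 1) :
    perronF t = -(Real.log t : ℂ) := by
  have : Real.log t ≤ 0 := Real.log_nonpos ht.1.le ht.2
  rw [perronF, max_eq_left (by linarith)]
  push_cast; ring

lemma perronF_eq_zero {t : ℝ} (ht : t ∈ Set.Ioi (1:ℝ)) : perronF t = 0 := by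
  have : 0 < Real.log t := Real.log_pos ht
  rw [perronF, max_eq_right (by linarith)]
  simp

lemma perron_eqOn_Ioc {s : ℂ} : Set.EqOn (fun x : ℝ => (x : ℂ) ^ (s - 1) * (-(Real.log x : ℂ)))
    (fun t : ℝ => (t : ℂ) ^ (s - 1) • perronF t) (Set.Ioc 0 1) := fun t ht => by
  simp only [smul_eq_mul, perronF_eq_on_Ioc ht]

lemma perron_eqOn_Ioi {s : ℂ} : Set.EqOn (fun _ : ℝ => (0:ℂ))
    (fun t : ℝ => (t : ℂ) ^ (s - 1) • perronF t) (Set.Ioi 1) := fun t ht => by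
  simp [perronF_eq_zero ht]

lemma perron_mellinConvergent {s : ℂ} (hs : 0 < s.re) : MellinConvergent perronF s := by
  rw [MellinConvergent,
    show Set.Ioi (0:ℝ) = Set.Ioc 0 1 ∪ Set.Ioi 1 from (Set.Ioc_union_Ioi_eq_Ioi zero_le_one).symm]
  exact IntegrableOn.union
    ((perron_integrableOn hs).congr_fun perron_eqOn_Ioc measurableSet_Ioc)
    ((integrableOn_zero).congr_fun perron_eqOn_Ioi measurableSet_Ioi)

lemma perron_mellin {s : ℂ} (hs : 0 < s.re) : mellin perronF s = 1 / s ^ 2 := by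
  rw [mellin,
    show Set.Ioi (0:ℝ) = Set.Ioc 0 1 ∪ Set.Ioi 1 from (Set.Ioc_union_Ioi_eq_Ioi zero_le_one).symm,
    setIntegral_union (Set.Ioc_disjoint_Ioi le_rfl) measurableSet_Ioi
      ((perron_integrableOn hs).congr_fun perron_eqOn_Ioc measurableSet_Ioc)
      ((integrableOn_zero).congr_fun perron_eqOn_Ioi measurableSet_Ioi),
    ← setIntegral_congr_fun measurableSet_Ioc perron_eqOn_Ioc,
    ← setIntegral_congr_fun measurableSet_Ioi perron_eqOn_Ioi,
    perron_integral_Ioc hs]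
  simp

lemma perron_re {σ₀ t : ℝ} : ((σ₀ : ℂ) + t * I).re = σ₀ := by simp

lemma perron_ne_zero {σ₀ : ℝ} (hσ : 0 < σ₀) (t : ℝ) : ((σ₀ : ℂ) + t * I) ≠ 0 := fun h => by
  have := congrArg Complex.re h
  rw [perron_re] at this
  simp at this
  exact hσ.ne' this

lemma perron_vertical {σ₀ : ℝ} (hσ : 2 < σ₀) :
    Complex.VerticalIntegrable (mellin perronF) σ₀ := by
  have hσ0 : (0:ℝ) < σ₀ := by linarith
  rw [Complex.VerticalIntegrable]
  have heq : (fun t : ℝ => mellin perronF ((σ₀ : ℂ) + t * I))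
      = fun t : ℝ => 1 / ((σ₀ : ℂ) + t * I) ^ 2 := by
    funext t
    rw [perron_mellin (by rw [perron_re]; exact hσ0)]
  rw [heq]
  have hcont : Continuous fun t : ℝ => 1 / ((σ₀ : ℂ) + t * I) ^ 2 := by
    refine continuous_const.div ((continuous_const.add (Complex.continuous_ofReal.mul
      continuous_const)).pow 2) fun t => pow_ne_zero 2 (perron_ne_zero hσ0 t)
  refine Integrable.mono integrable_inv_one_add_sq hcont.aestronglyMeasurable (ae_of_all _ fun t => ?_)
  have habs : ‖((σ₀ : ℂ) + t * I)‖ ^ 2 = σ₀ ^ 2 + t ^ 2 := by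
    rw [← Complex.normSq_eq_norm_sq, Complex.normSq_apply]
    simp
    ring
  rw [norm_div, norm_one, norm_pow, habs, Real.norm_eq_abs,
    _root_.abs_of_pos (by positivity)]
  rw [one_div, inv_le_inv₀ (by positivity) (by positivity)]
  nlinarith

theorem vertical_line_integral (σ₀ : ℝ) (hσ : 2 < σ₀) (y : ℝ) (hy : 0 < y) :
    (1 / (2 * Real.pi)) * ∫ t : ℝ,
        Complex.exp ((σ₀ + t * Complex.I) * Real.log y) / (σ₀ + t * Complex.I) ^ 2
      = if y ≤ 1 then 0 else (Real.log y : ℂ) := by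
  have hσ0 : (0:ℝ) < σ₀ := by linarith
  have hx : (0:ℝ) < 1 / y := by positivity
  have hcont : ContinuousAt perronF (1 / y) := by
    refine Complex.continuous_ofReal.continuousAt.comp ?_
    exact ((Real.continuousAt_log (ne_of_gt hx)).neg.max continuousAt_const)
  have key := mellinInv_mellin_eq σ₀ perronF hx
    (perron_mellinConvergent (by rw [Complex.ofReal_re]; exact hσ0))
    (perron_vertical hσ) hcont
  rw [mellinInv] at key
  have hlog : Complex.log ((1 / y : ℝ) : ℂ) = -(Real.log y : ℂ) := by
    rw [← Complex.ofReal_log hx.le, one_div, Real.log_inv]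
    push_cast; ring
  have hint : ∀ t : ℝ, ((1 / y : ℝ) : ℂ) ^ (-((σ₀ : ℂ) + t * I)) • mellin perronF ((σ₀ : ℂ) + t * I)
      = Complex.exp ((σ₀ + t * Complex.I) * Real.log y) / (σ₀ + t * Complex.I) ^ 2 := by
    intro t
    rw [perron_mellin (by rw [perron_re]; exact hσ0), smul_eq_mul,
      Complex.cpow_def_of_ne_zero (by exact_mod_cast (ne_of_gt hx)), hlog]
    rw [show -(Real.log y : ℂ) * -((σ₀ : ℂ) + t * I) = ((σ₀ : ℂ) + t * I) * (Real.log y : ℂ) by ring]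
    rw [mul_one_div]
  simp_rw [hint] at key
  have hf : perronF (1 / y) = if y ≤ 1 then 0 else (Real.log y : ℂ) := by
    rw [perronF, one_div, Real.log_inv, neg_neg]
    split_ifs with h
    · rw [max_eq_right (Real.log_nonpos hy.le h)]
      simp
    · rw [max_eq_left (Real.log_nonneg (by linarith [lt_of_not_ge h]))]
  rw [hf] at key
  rw [← key, Complex.real_smul]
  push_cast
  ring
end

section
/- Let H : ℝ → ℝ be a continuous function supported in (0, Λ) with Λ > 0, and let ℓ, δ, r₁, r₂ be positive integers with 3ℓδr₁r₂/π² < Λ. Then δ · ∫₀^{1/(δr₁)} ∫₀^{1/(δr₂)} H(3ℓ/(π² δ u v)) dv du = (3ℓ/π²) · ∫_{3ℓr₁r₂δ/π²}^{Λ} (H(λ)/λ²) · log(π²λ/(3ℓr₁r₂δ)) dλ. -/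
open Real MeasureTheory

lemma subA (k b : ℝ) (hk : 0 < k) (hb : 0 < b) (f : ℝ → ℝ) :
    ∫ v in Set.Ioo (0:ℝ) b, f (k / v) = ∫ t in Set.Ioi (k / b), (k / t ^ 2) * f t := by
  have hkb : 0 < k / b := div_pos hk hb
  have himg : (fun x : ℝ => k / x) '' Set.Ioi (k / b) = Set.Ioo 0 b := by
    ext v
    constructor
    · rintro ⟨t, ht, rfl⟩
      have ht' : 0 < t := lt_trans hkb ht
      refine ⟨div_pos hk ht', ?_⟩
      rw [div_lt_iff₀ ht']
      calc k = (k / b) * b := by field_simp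
        _ < t * b := mul_lt_mul_of_pos_right ht hb
        _ = b * t := mul_comm _ _
    · rintro ⟨hv0, hvb⟩
      refine ⟨k / v, ?_, by field_simp⟩
      rw [Set.mem_Ioi, div_lt_div_iff₀ hb hv0]
      exact mul_lt_mul_of_pos_left hvb hk
  have hderiv : ∀ t ∈ Set.Ioi (k / b),
      HasDerivWithinAt (fun x : ℝ => k / x) (-(k / t ^ 2)) (Set.Ioi (k / b)) t := by
    intro t ht
    have ht' : (0:ℝ) < t := lt_trans hkb ht
    have h1 := (hasDerivAt_inv ht'.ne').const_mul k
    have h2 : HasDerivAt (fun x : ℝ => k / x) (-(k / t ^ 2)) t := by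
      have h3 := h1.congr_deriv (show k * -(t ^ 2)⁻¹ = -(k / t ^ 2) by ring)
      simpa only [div_eq_mul_inv] using h3
    exact h2.hasDerivWithinAt
  have hinj : Set.InjOn (fun x : ℝ => k / x) (Set.Ioi (k / b)) := by
    intro x hx y hy hxy
    have hx' : 0 < x := lt_trans hkb hx
    have hy' : 0 < y := lt_trans hkb hy
    simp only at hxy
    have : x = k / (k / x) := by field_simp
    rw [this, hxy]
    field_simp
  calc ∫ v in Set.Ioo (0:ℝ) b, f (k / v)
      = ∫ v in (fun x : ℝ => k / x) '' Set.Ioi (k / b), f (k / v) := by rw [himg]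
    _ = ∫ t in Set.Ioi (k / b), |(-(k / t ^ 2))| • f (k / (k / t)) :=
        integral_image_eq_integral_abs_deriv_smul measurableSet_Ioi hderiv hinj _
    _ = ∫ t in Set.Ioi (k / b), (k / t ^ 2) * f t := by
        refine setIntegral_congr_fun measurableSet_Ioi (fun t ht => ?_)
        have ht' : 0 < t := lt_trans hkb ht
        have h1 : k / (k / t) = t := by field_simp
        have h2 : |(-(k / t ^ 2))| = k / t ^ 2 := by
          rw [abs_neg, abs_of_pos (div_pos hk (pow_pos ht' 2))]
        rw [h1, h2, smul_eq_mul]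

theorem double_integral_identity (Λ : ℝ) (hΛ : 0 < Λ) (H : ℝ → ℝ)
    (hH : Continuous H) (hsupp : Function.support H ⊆ Set.Ioo 0 Λ)
    (l δ r₁ r₂ : ℕ) (hl : 0 < l) (hδ : 0 < δ) (hr₁ : 0 < r₁) (hr₂ : 0 < r₂)
    (hsize : 3 * (l : ℝ) * δ * r₁ * r₂ / π ^ 2 < Λ) :
    (δ : ℝ) * ∫ u in Set.Ioo (0 : ℝ) (1 / (δ * r₁ : ℝ)),
        ∫ v in Set.Ioo (0 : ℝ) (1 / (δ * r₂ : ℝ)),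
          H (3 * l / (π ^ 2 * δ * u * v))
      = (3 * (l : ℝ) / π ^ 2) *
          ∫ lam in Set.Ioc (3 * (l : ℝ) * r₁ * r₂ * δ / π ^ 2) Λ,
            (H lam / lam ^ 2) * Real.log (π ^ 2 * lam / (3 * l * r₁ * r₂ * δ)) := by
  have hπ : (0:ℝ) < π ^ 2 := by positivity
  have hl' : (0:ℝ) < l := by exact_mod_cast hl
  have hδ' : (0:ℝ) < δ := by exact_mod_cast hδ
  have hr₁' : (0:ℝ) < r₁ := by exact_mod_cast hr₁
  have hr₂' : (0:ℝ) < r₂ := by exact_mod_cast hr₂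
  set c : ℝ := 3 * l / (π ^ 2 * δ) with hc
  have hc0 : 0 < c := by positivity
  set b₁ : ℝ := 1 / ((δ : ℝ) * r₁) with hb₁
  set b₂ : ℝ := 1 / ((δ : ℝ) * r₂) with hb₂
  have hb₁0 : 0 < b₁ := by positivity
  have hb₂0 : 0 < b₂ := by positivity
  set M : ℝ := 3 * (l : ℝ) * r₁ * r₂ * δ / π ^ 2 with hMdef
  have hM0 : 0 < M := by positivity
  have hMΛ : M < Λ := by
    have : M = 3 * (l : ℝ) * δ * r₁ * r₂ / π ^ 2 := by rw [hMdef]; ring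
    linarith [this ▸ hsize]
  set g : ℝ → ℝ := fun lam => H lam / lam ^ 2 with hg
  have hH0 : ∀ x, x ∉ Set.Ioo (0:ℝ) Λ → H x = 0 := by
    intro x hx
    by_contra h
    exact hx (hsupp h)
  have hg0 : ∀ x, Λ ≤ x → g x = 0 := by
    intro x hx
    have : H x = 0 := hH0 x (fun hx' => absurd hx (not_le.mpr hx'.2))
    simp [hg, this]
  have hgcont : ∀ x : ℝ, x ≠ 0 → ContinuousAt g x := fun x hx =>
    (hH.continuousAt).div ((continuous_pow 2).continuousAt) (pow_ne_zero 2 hx)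
  have hgco : ∀ s : Set ℝ, (∀ x ∈ s, x ≠ 0) → ContinuousOn g s := fun s hs x hx =>
    (hgcont x (hs x hx)).continuousWithinAt
  have hgm : Measurable g := (hH.measurable).div (measurable_id.pow_const 2)
  set F : ℝ → ℝ := fun t => ∫ lam in Set.Ioi t, g lam with hF
  set G : ℝ → ℝ := fun t => ∫ x in t..Λ, g x with hG
  have hgIoiΛ : IntegrableOn g (Set.Ioi Λ) :=
    (integrableOn_zero).congr_fun (fun x hx => (hg0 x (Set.mem_Ioi.mp hx).le).symm)
      measurableSet_Ioi
  have hgint : ∀ t : ℝ, 0 < t → IntegrableOn g (Set.Ioi t) := by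
    intro t ht
    rcases le_or_gt t Λ with h | h
    · rw [← Set.Ioc_union_Ioi_eq_Ioi h]
      refine IntegrableOn.union ?_ hgIoiΛ
      refine ((hgco (Set.Icc t Λ) (fun x hx => (lt_of_lt_of_le ht hx.1).ne')).integrableOn_Icc).mono_set
        Set.Ioc_subset_Icc_self
    · exact hgIoiΛ.mono_set (Set.Ioi_subset_Ioi h.le)
  have hF0 : ∀ t, Λ ≤ t → F t = 0 := fun t ht =>
    setIntegral_eq_zero_of_forall_eq_zero (fun x hx => hg0 x (ht.trans (Set.mem_Ioi.mp hx).le))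
  have hFG : ∀ t : ℝ, 0 < t → F t = G t := by
    intro t ht
    rcases le_or_gt t Λ with h | h
    · have hdisj : Disjoint (Set.Ioc t Λ) (Set.Ioi Λ) := by
        rw [Set.disjoint_left]
        intro x hx1 hx2
        exact absurd (Set.mem_Ioi.mp hx2) (not_lt.mpr hx1.2)
      have hsplit := setIntegral_union hdisj measurableSet_Ioi
        (((hgco (Set.Icc t Λ) (fun x hx => (lt_of_lt_of_le ht hx.1).ne')).integrableOn_Icc).mono_set
          Set.Ioc_subset_Icc_self) hgIoiΛ (f := g) (μ := volume)
      rw [hF, hG]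
      simp only
      rw [← Set.Ioc_union_Ioi_eq_Ioi h, hsplit,
        setIntegral_eq_zero_of_forall_eq_zero (fun x hx => hg0 x (Set.mem_Ioi.mp hx).le),
        add_zero, intervalIntegral.integral_of_le h]
    · rw [hF0 t h.le, hG]
      simp only
      rw [intervalIntegral.integral_of_ge h.le,
        setIntegral_eq_zero_of_forall_eq_zero (fun x hx => hg0 x hx.1.le), neg_zero]
  -- key1 : inner integral
  have key1 : ∀ u ∈ Set.Ioo (0:ℝ) b₁,
      (∫ v in Set.Ioo (0:ℝ) b₂, H (3 * l / (π ^ 2 * δ * u * v)))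
        = b₂ * ((c / b₂) / u) * F ((c / b₂) / u) := by
    intro u hu
    have hu0 : 0 < u := hu.1
    have hcu : 0 < c / u := by positivity
    calc (∫ v in Set.Ioo (0:ℝ) b₂, H (3 * l / (π ^ 2 * δ * u * v)))
        = ∫ v in Set.Ioo (0:ℝ) b₂, H ((c / u) / v) := by
          refine setIntegral_congr_fun measurableSet_Ioo (fun v hv => ?_)
          have hv0 : 0 < v := hv.1
          congr 1
          rw [hc]
          field_simp
      _ = ∫ t in Set.Ioi ((c / u) / b₂), ((c / u) / t ^ 2) * H t := subA (c/u) b₂ hcu hb₂0 H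
      _ = ∫ t in Set.Ioi ((c / b₂) / u), ((c / u) / t ^ 2) * H t := by
          rw [div_right_comm]
      _ = ∫ t in Set.Ioi ((c / b₂) / u), (c / u) * g t := by
          refine setIntegral_congr_fun measurableSet_Ioi (fun t ht => ?_)
          have ht0 : 0 < t := lt_trans (by positivity) (Set.mem_Ioi.mp ht)
          rw [hg]
          simp only
          field_simp
      _ = (c / u) * F ((c / b₂) / u) := integral_const_mul _ _
      _ = b₂ * ((c / b₂) / u) * F ((c / b₂) / u) := by
          have : b₂ * ((c / b₂) / u) = c / u := by field_simp
          rw [this]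
  have h5 : (c / b₂) / b₁ = M := by
    rw [hc, hb₁, hb₂, hMdef]
    field_simp
  have step2 : (∫ u in Set.Ioo (0:ℝ) b₁, ∫ v in Set.Ioo (0:ℝ) b₂, H (3 * l / (π ^ 2 * δ * u * v)))
      = c * ∫ t in Set.Ioi M, F t / t := by
    calc (∫ u in Set.Ioo (0:ℝ) b₁, ∫ v in Set.Ioo (0:ℝ) b₂, H (3 * l / (π ^ 2 * δ * u * v)))
        = ∫ u in Set.Ioo (0:ℝ) b₁, b₂ * ((c / b₂) / u) * F ((c / b₂) / u) :=
          setIntegral_congr_fun measurableSet_Ioo (fun u hu => key1 u hu)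
      _ = ∫ t in Set.Ioi ((c / b₂) / b₁), ((c / b₂) / t ^ 2) * (b₂ * t * F t) :=
          subA (c / b₂) b₁ (by positivity) hb₁0 (fun t => b₂ * t * F t)
      _ = ∫ t in Set.Ioi M, ((c / b₂) / t ^ 2) * (b₂ * t * F t) := by rw [h5]
      _ = ∫ t in Set.Ioi M, c * (F t / t) := by
          refine setIntegral_congr_fun measurableSet_Ioi (fun t ht => ?_)
          have ht0 : 0 < t := lt_trans hM0 (Set.mem_Ioi.mp ht)
          field_simp
      _ = c * ∫ t in Set.Ioi M, F t / t := integral_const_mul _ _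
  -- step 3
  have huIcc : Set.uIcc M Λ = Set.Icc M Λ := Set.uIcc_of_le hMΛ.le
  have hGderiv : ∀ t ∈ Set.uIcc M Λ, HasDerivAt G (-g t) t := by
    intro t ht
    rw [huIcc] at ht
    have ht0 : 0 < t := lt_of_lt_of_le hM0 ht.1
    refine intervalIntegral.integral_hasDerivAt_left ?_ (hgm.stronglyMeasurable.stronglyMeasurableAtFilter) (hgcont t ht0.ne')
    refine (hgco (Set.uIcc t Λ) (fun x hx => ?_)).intervalIntegrable
    have : min t Λ ≤ x := hx.1
    have h2 : 0 < min t Λ := lt_min ht0 hΛ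
    exact (lt_of_lt_of_le h2 this).ne'
  have hGcont : ContinuousOn G (Set.Icc M Λ) := fun t ht =>
    ((hGderiv t (huIcc ▸ ht)).continuousAt).continuousWithinAt
  have step3 : (∫ t in Set.Ioi M, F t / t)
      = ∫ lam in Set.Ioc M Λ, g lam * (Real.log lam - Real.log M) := by
    have hint1 : IntegrableOn (fun t => F t / t) (Set.Ioc M Λ) := by
      have hGQ : IntegrableOn (fun t => G t / t) (Set.Ioc M Λ) := by
        refine ((ContinuousOn.div hGcont continuousOn_id (fun t ht => (lt_of_lt_of_le hM0 ht.1).ne')).integrableOn_Icc).mono_set Set.Ioc_subset_Icc_self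
      exact hGQ.congr_fun (fun t ht => by rw [hFG t (lt_trans hM0 ht.1)]) measurableSet_Ioc
    have hint2 : IntegrableOn (fun t => F t / t) (Set.Ioi Λ) :=
      (integrableOn_zero).congr_fun
        (fun x hx => by rw [hF0 x (Set.mem_Ioi.mp hx).le, zero_div]) measurableSet_Ioi
    have hdisj : Disjoint (Set.Ioc M Λ) (Set.Ioi Λ) := by
      rw [Set.disjoint_left]
      intro x hx1 hx2
      exact absurd (Set.mem_Ioi.mp hx2) (not_lt.mpr hx1.2)
    have hsplit : (∫ t in Set.Ioi M, F t / t)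
        = (∫ t in Set.Ioc M Λ, F t / t) + ∫ t in Set.Ioi Λ, F t / t := by
      rw [← Set.Ioc_union_Ioi_eq_Ioi hMΛ.le, setIntegral_union hdisj measurableSet_Ioi hint1 hint2]
    have hzero2 : (∫ t in Set.Ioi Λ, F t / t) = 0 :=
      setIntegral_eq_zero_of_forall_eq_zero
        (fun x hx => by rw [hF0 x (Set.mem_Ioi.mp hx).le, zero_div])
    -- integration by parts on [M, Λ]
    have hu : ∀ x ∈ Set.uIcc M Λ, HasDerivAt (fun t => Real.log t - Real.log M) (1 / x) x := by
      intro x hx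
      rw [huIcc] at hx
      have hx0 : 0 < x := lt_of_lt_of_le hM0 hx.1
      simpa [one_div] using (Real.hasDerivAt_log hx0.ne').sub_const (Real.log M)
    have hu' : IntervalIntegrable (fun x : ℝ => 1 / x) volume M Λ := by
      refine (ContinuousOn.div continuousOn_const continuousOn_id (fun x hx => ?_)).intervalIntegrable
      rw [huIcc] at hx
      exact (lt_of_lt_of_le hM0 hx.1).ne'
    have hv' : IntervalIntegrable (fun x => -g x) volume M Λ := by
      refine ((hgco (Set.uIcc M Λ) (fun x hx => ?_)).intervalIntegrable).neg
      rw [huIcc] at hx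
      exact (lt_of_lt_of_le hM0 hx.1).ne'
    have parts := intervalIntegral.integral_mul_deriv_eq_deriv_mul hu hGderiv hu' hv'
    have hGΛ : G Λ = 0 := by rw [hG]; simp only; rw [intervalIntegral.integral_same]
    rw [hGΛ] at parts
    -- parts : ∫ x in M..Λ, (log x - log M) * (-g x) = (log Λ - log M) * 0 - (log M - log M) * G M - ∫ x in M..Λ, (1/x) * G x
    have hmain : (∫ x in M..Λ, (1 / x) * G x) = ∫ x in M..Λ, (Real.log x - Real.log M) * g x := by
      have h1 : (∫ x in M..Λ, (Real.log x - Real.log M) * (-g x))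
          = -∫ x in M..Λ, (Real.log x - Real.log M) * g x := by
        rw [← intervalIntegral.integral_neg]
        congr 1
        funext x
        ring
      rw [h1] at parts
      have : Real.log M - Real.log M = 0 := sub_self _
      rw [this] at parts
      simp only [mul_zero, zero_mul, zero_sub] at parts
      linarith
    calc (∫ t in Set.Ioi M, F t / t)
        = (∫ t in Set.Ioc M Λ, F t / t) + ∫ t in Set.Ioi Λ, F t / t := hsplit
      _ = ∫ t in Set.Ioc M Λ, F t / t := by rw [hzero2, add_zero]
      _ = ∫ t in Set.Ioc M Λ, (1 / t) * G t := by
          refine setIntegral_congr_fun measurableSet_Ioc (fun t ht => ?_)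
          rw [hFG t (lt_trans hM0 ht.1)]
          ring
      _ = ∫ t in M..Λ, (1 / t) * G t := (intervalIntegral.integral_of_le hMΛ.le).symm
      _ = ∫ x in M..Λ, (Real.log x - Real.log M) * g x := hmain
      _ = ∫ lam in Set.Ioc M Λ, (Real.log lam - Real.log M) * g lam :=
          intervalIntegral.integral_of_le hMΛ.le
      _ = ∫ lam in Set.Ioc M Λ, g lam * (Real.log lam - Real.log M) := by
          refine setIntegral_congr_fun measurableSet_Ioc (fun lam hlam => ?_)
          ring
  have hfinal : (∫ lam in Set.Ioc M Λ, g lam * (Real.log lam - Real.log M))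
      = ∫ lam in Set.Ioc M Λ, (H lam / lam ^ 2) * Real.log (π ^ 2 * lam / (3 * l * r₁ * r₂ * δ)) := by
    refine setIntegral_congr_fun measurableSet_Ioc (fun lam hlam => ?_)
    have hlam0 : 0 < lam := lt_trans hM0 hlam.1
    have harg : π ^ 2 * lam / (3 * (l:ℝ) * r₁ * r₂ * δ) = lam / M := by
      rw [hMdef]
      field_simp
    rw [hg]
    simp only
    rw [harg, Real.log_div hlam0.ne' hM0.ne']
  have hδc : (δ : ℝ) * c = 3 * l / π ^ 2 := by
    rw [hc]
    field_simp
  calc (δ : ℝ) * ∫ u in Set.Ioo (0 : ℝ) b₁, ∫ v in Set.Ioo (0 : ℝ) b₂, H (3 * l / (π ^ 2 * δ * u * v))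
      = (δ : ℝ) * (c * ∫ t in Set.Ioi M, F t / t) := by rw [step2]
    _ = ((δ : ℝ) * c) * ∫ t in Set.Ioi M, F t / t := by ring
    _ = (3 * (l : ℝ) / π ^ 2) * ∫ t in Set.Ioi M, F t / t := by rw [hδc]
    _ = (3 * (l : ℝ) / π ^ 2) *
          ∫ lam in Set.Ioc M Λ, (H lam / lam ^ 2) * Real.log (π ^ 2 * lam / (3 * l * r₁ * r₂ * δ)) := by
        rw [step3, hfinal]
end
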